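/- Key logarithmic edge-length estimate: for all integers d ≥ 2, n ≥ 3 and m ≥ 2, for every v ∈ ℝ_*^{d×n}, every h ∈ (ℝ^d)^n, and every i ∈ ℤ/nℤ, one has |⟨e_i(v), h_{i+1} − h_i⟩| / |e_i(v)|² ≤ 2^{−(m−1)} · √(g^m_v(h,h)). Equivalently, along any differentiable curve t ↦ v(t) in ℝ_*^{d×n} with v(0) = v and v′(0) = h, the derivative of t ↦ log|e_i(v(t))| at t = 0 is bounded in absolute value by 2^{−(m−1)} √(g^m_v(h,h)). -/

import Mathlib

open scoped InnerProductSpace BigOperators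
open MeasureTheory Filter Topology

noncomputable section

/-- Euclidean space ℝ^d. -/
abbrev Vec (d : ℕ) := EuclideanSpace ℝ (Fin d)

variable {d n : ℕ}

/-- Edges of the discrete closed curve: `e i (v) = v (i+1) - v i`. -/
def edge (v : ZMod n → Vec d) (i : ZMod n) : Vec d := v (i + 1) - v i

/-- Discrete regularity: adjacent vertices are distinct. -/
def IsReg (v : ZMod n → Vec d) : Prop := ∀ i, v i ≠ v (i + 1)

/-- Total length of the discrete curve. -/
def len [NeZero n] (v : ZMod n → Vec d) : ℝ := ∑ i, ‖edge v i‖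

/-- Discrete arc-length derivative of order `m`: odd orders use forward differences
divided by `|e_i|`, even (positive) orders use backward differences divided by the
averaged edge length. -/
def Ds (v h : ZMod n → Vec d) : ℕ → ZMod n → Vec d
  | 0 => h
  | (m + 1) => fun i =>
    if (m + 1) % 2 = 1 then
      (‖edge v i‖)⁻¹ • (Ds v h m (i + 1) - Ds v h m i)
    else
      ((‖edge v i‖ + ‖edge v (i - 1)‖) / 2)⁻¹ • (Ds v h m i - Ds v h m (i - 1))

/-- The weights μ_i in the higher-order term. -/
def mu (v : ZMod n → Vec d) (m : ℕ) (i : ZMod n) : ℝ :=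
  if m % 2 = 1 then ‖edge v i‖ else (‖edge v i‖ + ‖edge v (i - 1)‖) / 2

/-- The discrete Sobolev-type metric of order `m`. -/
def gMet [NeZero n] (m : ℕ) (v h k : ZMod n → Vec d) : ℝ :=
  ∑ i, (⟪h i, k i⟫_ℝ / len v ^ 3 * ((‖edge v i‖ + ‖edge v (i - 1)‖) / 2)
    + ⟪Ds v h m i, Ds v k m i⟫_ℝ / len v ^ ((3 : ℤ) - 2 * (m : ℤ)) * mu v m i)

/-!
The quantity on the left is at most `‖D_s h_i‖` (Cauchy–Schwarz). For `k ≥ 1` the field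
`D_s^k h` has vanishing `μ`-weighted mean, because `μ_i D_s^k h_i` telescopes around the closed
curve; a function with weighted mean zero on a cycle is bounded by half its total variation, and the
total variation of `D_s^k h` is the weighted `L¹` norm of `D_s^{k+1} h`. Iterating from `k = 1` to
`k = m - 1` gains a factor `l / 2` at every step, and a final Cauchy–Schwarz inequality compares
the weighted `L¹` norm of `D_s^m h` with the top-order term of `g^m_v(h, h)`; the powers of the
length cancel exactly by the scaling `l^{2m-3}` built into the metric.
-/

section Cycle

variable {E : Type*} [SeminormedAddCommGroup E]

lemma sum_range_comp_add_natCast [NeZero n] {M : Type*} [AddCommMonoid M] (g : ZMod n → M)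
    (i : ZMod n) : ∑ s ∈ Finset.range n, g (i + s) = ∑ k, g k := by
  refine Finset.sum_nbij' (fun s : ℕ => i + (s : ZMod n)) (fun k => (k - i).val)
    (fun _ _ => Finset.mem_univ _) (fun k _ => Finset.mem_range.mpr (ZMod.val_lt _))
    (fun s hs => ?_) (fun k _ => ?_) (fun _ _ => rfl)
  · rw [add_sub_cancel_left, ZMod.val_cast_of_lt (Finset.mem_range.mp hs)]
  · rw [ZMod.natCast_zmod_val, add_sub_cancel]

lemma norm_sub_le_sum_range_norm_sub {R : Type*} [AddMonoidWithOne R] (f : R → E) (i : R)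
    (t : ℕ) : ‖f (i + t) - f i‖ ≤ ∑ s ∈ Finset.range t, ‖f (i + s + 1) - f (i + s)‖ := by
  induction t with
  | zero => simp
  | succ t ih =>
    rw [Finset.sum_range_succ, Nat.cast_succ, ← add_assoc]
    linarith [norm_sub_le_norm_sub_add_norm_sub (f (i + t + 1)) (f (i + t)) (f i)]

-- Two vertices of a cycle split it into two arcs, and each arc bounds their distance.
lemma norm_sub_le_half_sum_norm_sub [NeZero n] (f : ZMod n → E) (i j : ZMod n) :
    ‖f j - f i‖ ≤ (∑ k, ‖f (k + 1) - f k‖) / 2 := by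
  set t := (j - i).val
  have htn : t ≤ n := (ZMod.val_lt _).le
  have hj : i + t = j := by rw [ZMod.natCast_zmod_val, add_sub_cancel]
  have hi : j + (n - t : ℕ) = i := by
    rw [Nat.cast_sub htn, ZMod.natCast_self, ← hj]
    ring
  have arcs := Finset.sum_range_add (fun s : ℕ => ‖f (i + s + 1) - f (i + s)‖) t (n - t)
  rw [Nat.add_sub_cancel' htn, sum_range_comp_add_natCast (fun k => ‖f (k + 1) - f k‖) i] at arcs
  have hsecond : ∀ s : ℕ, i + ((t + s : ℕ) : ZMod n) = j + s := fun s => by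
    rw [← hj]; push_cast; ring
  simp only [hsecond] at arcs
  have h1 := norm_sub_le_sum_range_norm_sub f i t
  have h2 := norm_sub_le_sum_range_norm_sub f j (n - t)
  rw [hj] at h1
  rw [hi, norm_sub_rev] at h2
  linarith

lemma norm_le_half_sum_norm_sub_of_sum_smul_eq_zero [NeZero n] [NormedSpace ℝ E]
    {w : ZMod n → ℝ} (hw : ∀ k, 0 ≤ w k) (hw_sum : 0 < ∑ k, w k) {f : ZMod n → E}
    (hf : ∑ k, w k • f k = 0) (j : ZMod n) :
    ‖f j‖ ≤ (∑ k, ‖f (k + 1) - f k‖) / 2 := by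
  have hcenter : (∑ k, w k) • f j = ∑ k, w k • (f j - f k) := by
    simp only [smul_sub, Finset.sum_sub_distrib, hf, sub_zero, Finset.sum_smul]
  refine le_of_mul_le_mul_left ?_ hw_sum
  calc (∑ k, w k) * ‖f j‖ = ‖∑ k, w k • (f j - f k)‖ := by
        rw [← hcenter, norm_smul, Real.norm_of_nonneg hw_sum.le]
    _ ≤ ∑ k, w k * ‖f j - f k‖ := by
        refine (norm_sum_le _ _).trans_eq (Finset.sum_congr rfl fun k _ => ?_)
        rw [norm_smul, Real.norm_of_nonneg (hw k)]
    _ ≤ ∑ k, w k * ((∑ k, ‖f (k + 1) - f k‖) / 2) :=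
        Finset.sum_le_sum fun k _ =>
          mul_le_mul_of_nonneg_left (norm_sub_le_half_sum_norm_sub f k j) (hw k)
    _ = (∑ k, w k) * ((∑ k, ‖f (k + 1) - f k‖) / 2) := (Finset.sum_mul ..).symm

end Cycle

lemma abs_inner_div_norm_sq_le {F : Type*} [NormedAddCommGroup F] [InnerProductSpace ℝ F]
    (e x : F) : |⟪e, x⟫_ℝ| / ‖e‖ ^ 2 ≤ ‖e‖⁻¹ * ‖x‖ := by
  rcases eq_or_ne e 0 with rfl | he
  · simp
  have he' : 0 < ‖e‖ := norm_pos_iff.mpr he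
  rw [div_le_iff₀ (by positivity)]
  calc |⟪e, x⟫_ℝ| ≤ ‖e‖ * ‖x‖ := abs_real_inner_le_norm e x
    _ = ‖e‖⁻¹ * ‖x‖ * ‖e‖ ^ 2 := by field_simp

section DiscreteCurve

variable {v : ZMod n → Vec d}

lemma norm_edge_pos (hv : IsReg v) (i : ZMod n) : 0 < ‖edge v i‖ :=
  norm_pos_iff.mpr (sub_ne_zero_of_ne (hv i).symm)

lemma mu_pos (hv : IsReg v) (m : ℕ) (i : ZMod n) : 0 < mu v m i := by
  unfold mu
  split
  · exact norm_edge_pos hv i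
  · linarith [norm_edge_pos hv i, norm_edge_pos hv (i - 1)]

lemma mu_smul_Ds_succ (hv : IsReg v) (h : ZMod n → Vec d) (m : ℕ) (i : ZMod n) :
    mu v (m + 1) i • Ds v h (m + 1) i =
      if (m + 1) % 2 = 1 then Ds v h m (i + 1) - Ds v h m i
      else Ds v h m i - Ds v h m (i - 1) := by
  rw [Ds, mu]
  split
  · exact smul_inv_smul₀ (norm_edge_pos hv i).ne' _
  · exact smul_inv_smul₀ (by linarith [norm_edge_pos hv i, norm_edge_pos hv (i - 1)]) _

variable [NeZero n]

def l1NormDs (v h : ZMod n → Vec d) (m : ℕ) : ℝ := ∑ k, mu v m k * ‖Ds v h m k‖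

lemma len_pos (hv : IsReg v) : 0 < len v :=
  Finset.sum_pos (fun i _ => norm_edge_pos hv i) Finset.univ_nonempty

lemma sum_mu (v : ZMod n → Vec d) (m : ℕ) : ∑ i, mu v m i = len v := by
  unfold mu len
  split
  · rfl
  · have hshift : ∑ i : ZMod n, ‖edge v (i - 1)‖ = ∑ i : ZMod n, ‖edge v i‖ :=
      Fintype.sum_equiv (Equiv.subRight 1) _ _ fun _ => rfl
    rw [← Finset.sum_div, Finset.sum_add_distrib, hshift]
    ring

-- Differences of a periodic sequence sum to zero.
lemma sum_mu_smul_Ds_succ (hv : IsReg v) (h : ZMod n → Vec d) (m : ℕ) :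
    ∑ i, mu v (m + 1) i • Ds v h (m + 1) i = 0 := by
  simp only [mu_smul_Ds_succ hv]
  split
  · rw [Finset.sum_sub_distrib, sub_eq_zero]
    exact Fintype.sum_equiv (Equiv.addRight 1) _ _ fun _ => rfl
  · rw [Finset.sum_sub_distrib, sub_eq_zero]
    exact (Fintype.sum_equiv (Equiv.subRight 1) _ _ fun _ => rfl).symm

lemma sum_norm_sub_Ds (hv : IsReg v) (h : ZMod n → Vec d) (m : ℕ) :
    ∑ k, ‖Ds v h m (k + 1) - Ds v h m k‖ = l1NormDs v h (m + 1) := by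
  have hterm : ∀ k, mu v (m + 1) k * ‖Ds v h (m + 1) k‖ =
      ‖if (m + 1) % 2 = 1 then Ds v h m (k + 1) - Ds v h m k
        else Ds v h m k - Ds v h m (k - 1)‖ := fun k => by
    rw [← mu_smul_Ds_succ hv, norm_smul, Real.norm_of_nonneg (mu_pos hv _ k).le]
  simp only [l1NormDs, hterm]
  split
  · rfl
  · exact Fintype.sum_equiv (Equiv.addRight 1) _ _ fun k => by simp

lemma norm_Ds_succ_le (hv : IsReg v) (h : ZMod n → Vec d) (m : ℕ) (j : ZMod n) :
    ‖Ds v h (m + 1) j‖ ≤ l1NormDs v h (m + 2) / 2 := by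
  rw [← sum_norm_sub_Ds hv]
  refine norm_le_half_sum_norm_sub_of_sum_smul_eq_zero (fun k => (mu_pos hv _ k).le) ?_
    (sum_mu_smul_Ds_succ hv h m) j
  exact sum_mu v _ ▸ len_pos hv

lemma l1NormDs_succ_le (hv : IsReg v) (h : ZMod n → Vec d) (m : ℕ) :
    l1NormDs v h (m + 1) ≤ len v / 2 * l1NormDs v h (m + 2) :=
  calc l1NormDs v h (m + 1) ≤ ∑ k, mu v (m + 1) k * (l1NormDs v h (m + 2) / 2) :=
        Finset.sum_le_sum fun k _ =>
          mul_le_mul_of_nonneg_left (norm_Ds_succ_le hv h m k) (mu_pos hv _ k).le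
    _ = len v / 2 * l1NormDs v h (m + 2) := by rw [← Finset.sum_mul, sum_mu]; ring

lemma norm_Ds_one_le (hv : IsReg v) (h : ZMod n → Vec d) (r : ℕ) (j : ZMod n) :
    ‖Ds v h 1 j‖ ≤ len v ^ r * l1NormDs v h (r + 2) / 2 ^ (r + 1) := by
  have hchain : l1NormDs v h 2 ≤ (len v / 2) ^ r * l1NormDs v h (r + 2) := by
    induction r with
    | zero => simp
    | succ r ih =>
      calc l1NormDs v h 2 ≤ (len v / 2) ^ r * l1NormDs v h (r + 2) := ih
        _ ≤ (len v / 2) ^ r * (len v / 2 * l1NormDs v h (r + 3)) := by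
            gcongr
            · exact pow_nonneg (div_pos (len_pos hv) two_pos).le r
            · exact l1NormDs_succ_le hv h (r + 1)
        _ = (len v / 2) ^ (r + 1) * l1NormDs v h (r + 3) := by ring
  calc ‖Ds v h 1 j‖ ≤ l1NormDs v h 2 / 2 := norm_Ds_succ_le hv h 0 j
    _ ≤ (len v / 2) ^ r * l1NormDs v h (r + 2) / 2 := by gcongr
    _ = len v ^ r * l1NormDs v h (r + 2) / 2 ^ (r + 1) := by rw [div_pow, pow_succ]; ring

lemma l1NormDs_sq_le (hv : IsReg v) (h : ZMod n → Vec d) (m : ℕ) :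
    l1NormDs v h m ^ 2 ≤ len v * ∑ k, mu v m k * ‖Ds v h m k‖ ^ 2 := by
  rw [← sum_mu v m]
  exact Finset.sum_sq_le_sum_mul_sum_of_sq_le_mul _ (fun k _ => (mu_pos hv m k).le)
    (fun k _ => by have := (mu_pos hv m k).le; positivity) fun k _ => le_of_eq (by ring)

lemma sum_mu_mul_norm_Ds_sq_le (hv : IsReg v) (h : ZMod n → Vec d) (m : ℕ) :
    ∑ k, mu v m k * ‖Ds v h m k‖ ^ 2 ≤ len v ^ ((3 : ℤ) - 2 * m) * gMet m v h h := by
  have hL : 0 < len v ^ ((3 : ℤ) - 2 * m) := zpow_pos (len_pos hv) _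
  rw [gMet, Finset.mul_sum]
  refine Finset.sum_le_sum fun k _ => ?_
  have hlow : 0 ≤ ⟪h k, h k⟫_ℝ / len v ^ 3 * ((‖edge v k‖ + ‖edge v (k - 1)‖) / 2) := by
    have := len_pos hv
    have := norm_edge_pos hv k
    have := norm_edge_pos hv (k - 1)
    have := real_inner_self_nonneg (x := h k)
    positivity
  have htop : len v ^ ((3 : ℤ) - 2 * m) *
      (‖Ds v h m k‖ ^ 2 / len v ^ ((3 : ℤ) - 2 * m) * mu v m k) = mu v m k * ‖Ds v h m k‖ ^ 2 := by
    field_simp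
  rw [real_inner_self_eq_norm_sq (Ds v h m k), mul_add, htop]
  linarith [mul_nonneg hL.le hlow]

lemma len_pow_mul_l1NormDs_le_sqrt_gMet (hv : IsReg v) (h : ZMod n → Vec d) (r : ℕ) :
    len v ^ r * l1NormDs v h (r + 2) ≤ √(gMet (r + 2) v h h) := by
  have hL := len_pos hv
  have hnonneg : 0 ≤ l1NormDs v h (r + 2) :=
    Finset.sum_nonneg fun k _ => mul_nonneg (mu_pos hv _ k).le (norm_nonneg _)
  have hscale : len v ^ (2 * r + 1) * len v ^ ((3 : ℤ) - 2 * ((r + 2 : ℕ) : ℤ)) = 1 := by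
    rw [show (3 : ℤ) - 2 * ((r + 2 : ℕ) : ℤ) = -((2 * r + 1 : ℕ) : ℤ) by push_cast; ring,
      zpow_neg, zpow_natCast, mul_inv_cancel₀ (by positivity)]
  refine Real.le_sqrt_of_sq_le ?_
  calc (len v ^ r * l1NormDs v h (r + 2)) ^ 2
      = len v ^ (2 * r) * l1NormDs v h (r + 2) ^ 2 := by ring
    _ ≤ len v ^ (2 * r) * (len v * ∑ k, mu v (r + 2) k * ‖Ds v h (r + 2) k‖ ^ 2) := by
        gcongr; exact l1NormDs_sq_le hv h _
    _ ≤ len v ^ (2 * r + 1) *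
          (len v ^ ((3 : ℤ) - 2 * ((r + 2 : ℕ) : ℤ)) * gMet (r + 2) v h h) := by
        rw [pow_succ, mul_assoc]
        gcongr
        exact sum_mu_mul_norm_Ds_sq_le hv h _
    _ = gMet (r + 2) v h h := by rw [← mul_assoc, hscale, one_mul]

end DiscreteCurve

theorem log_edge_deriv_bound_general (d n m : ℕ) [NeZero n]
    (hm : 2 ≤ m) (v : ZMod n → Vec d) (hv : IsReg v) (h : ZMod n → Vec d) (i : ZMod n) :
    |⟪edge v i, h (i + 1) - h i⟫_ℝ| / ‖edge v i‖ ^ 2 ≤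
      Real.sqrt (gMet m v h h) / 2 ^ (m - 1) := by
  obtain ⟨r, rfl⟩ : ∃ r, m = r + 2 := ⟨m - 2, by omega⟩
  have hDs_one : ‖Ds v h 1 i‖ = ‖edge v i‖⁻¹ * ‖h (i + 1) - h i‖ := by
    simp [Ds, norm_smul]
  calc |⟪edge v i, h (i + 1) - h i⟫_ℝ| / ‖edge v i‖ ^ 2
      ≤ ‖Ds v h 1 i‖ := hDs_one ▸ abs_inner_div_norm_sq_le _ _
    _ ≤ len v ^ r * l1NormDs v h (r + 2) / 2 ^ (r + 1) := norm_Ds_one_le hv h r i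
    _ ≤ √(gMet (r + 2) v h h) / 2 ^ (r + 1) := by
        gcongr; exact len_pow_mul_l1NormDs_le_sqrt_gMet hv h r

/-- key logarithmic edge-length estimate: for `m ≥ 2`,
`|⟨e_i(v), h_{i+1} - h_i⟩| / |e_i(v)|² ≤ 2^{-(m-1)} √(g^m_v(h,h))`, i.e. the derivative
of `log |e_i|` along any curve through `v` with velocity `h` is bounded by
`2^{-(m-1)} √(g^m_v(h,h))`. -/
theorem log_edge_deriv_bound (d n m : ℕ) (hd : 2 ≤ d) (hn : 3 ≤ n) [NeZero n]
    (hm : 2 ≤ m) (v : ZMod n → Vec d) (hv : IsReg v) (h : ZMod n → Vec d) (i : ZMod n) :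
    |⟪edge v i, h (i + 1) - h i⟫_ℝ| / ‖edge v i‖ ^ 2 ≤
      Real.sqrt (gMet m v h h) / 2 ^ (m - 1) :=
  log_edge_deriv_bound_general d n m hm v hv h i
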